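/- Reachability splits at an intermediate node: if y ∈ reach γ x, then reach γ x = reach (γ \ y) x ∪ reach γ y. -/

import Mathlib

open scoped Classical

/-- A partial graph of type `T`: a finite partial map from nodes (natural
numbers, undefined on `0 = null`) to pairs of a value and an adjacency list. -/
structure PGraph (T : Type) where
  f : ℕ → Option (T × List ℕ)
  dom : Finset ℕ
  mem_dom : ∀ x, x ∈ dom ↔ (f x).isSome
  null_not_mem : f 0 = none

namespace PGraph

variable {T T' : Type}

def empty : PGraph T :=
  ⟨fun _ => none, ∅, by intro x; simp, rfl⟩

/-- Total (left-biased) union; meaningful when domains are disjoint. -/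
def union (γ₁ γ₂ : PGraph T) : PGraph T where
  f := fun x => match γ₁.f x with
    | some v => some v
    | none => γ₂.f x
  dom := γ₁.dom ∪ γ₂.dom
  mem_dom := by
    intro x
    rw [Finset.mem_union, γ₁.mem_dom, γ₂.mem_dom]
    cases h : γ₁.f x <;> simp [h]
  null_not_mem := by simp [γ₁.null_not_mem, γ₂.null_not_mem]

/-- The partial PCM join: defined iff the domains are disjoint. -/
noncomputable def join (γ₁ γ₂ : PGraph T) : Option (PGraph T) :=
  if Disjoint γ₁.dom γ₂.dom then some (union γ₁ γ₂) else none

/-- Filter (restriction) of a graph to a set of nodes. -/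
noncomputable def restrict (γ : PGraph T) (S : Set ℕ) : PGraph T where
  f := fun x => if x ∈ S then γ.f x else none
  dom := γ.dom.filter (fun x => x ∈ S)
  mem_dom := by
    intro x
    rw [Finset.mem_filter, γ.mem_dom]
    by_cases h : x ∈ S <;> simp [h]
  null_not_mem := by simp [γ.null_not_mem]

/-- Map combinator: apply `g` pointwise at each node. -/
def mapNode (g : ℕ → T × List ℕ → T' × List ℕ) (γ : PGraph T) : PGraph T' where
  f := fun x => (γ.f x).map (g x)
  dom := γ.dom
  mem_dom := by intro x; rw [γ.mem_dom]; cases h : γ.f x <;> simp [h]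
  null_not_mem := by simp [γ.null_not_mem]

/-- Erasure: replace every value with the unit value, keeping adjacency. -/
def erasure (γ : PGraph T) : PGraph Unit :=
  mapNode (fun _ p => ((), p.2)) γ

/-- Adjacency list of a node. -/
def adj (γ : PGraph T) (x : ℕ) : List ℕ :=
  ((γ.f x).map Prod.snd).getD []

/-- The value stored at a node, if any. -/
def val? (γ : PGraph T) (x : ℕ) : Option T :=
  (γ.f x).map Prod.fst

/-- Sinks: nodes appearing in some adjacency list. -/
def sinks (γ : PGraph T) : Set ℕ :=
  ⋃ x ∈ γ.dom, {y | y ∈ γ.adj x}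

/-- A graph is closed if it has no dangling edges. -/
def Closed (γ : PGraph T) : Prop :=
  sinks γ ⊆ insert 0 (↑γ.dom : Set ℕ)

/-- Remove a node (and its outgoing edges) from the graph. -/
def erase (γ : PGraph T) (y : ℕ) : PGraph T where
  f := fun x => if x = y then none else γ.f x
  dom := γ.dom.erase y
  mem_dom := by
    intro x
    rw [Finset.mem_erase, γ.mem_dom]
    by_cases h : x = y <;> simp [h]
  null_not_mem := by
    by_cases h : (0 : ℕ) = y <;> simp [h, γ.null_not_mem]

/-- Set of nodes reachable from `x` in `γ`. -/
def reach (γ : PGraph T) (x : ℕ) : Set ℕ :=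
  if h : x ∈ γ.dom then
    {x} ∪ ⋃ y ∈ γ.adj x, reach (γ.erase x) y
  else ∅
termination_by γ.dom.card
decreasing_by simpa [PGraph.erase] using Finset.card_erase_lt_of_mem h

/-- Summits of a path starting at `x`. -/
def summit (γ : PGraph T) (x : ℕ) : Set ℕ :=
  if h : x ∈ γ.dom then ⋃ y ∈ γ.adj x, summit (γ.erase x) y
  else {x}
termination_by γ.dom.card
decreasing_by simpa [PGraph.erase] using Finset.card_erase_lt_of_mem h

/-- All summits of a graph. -/
def summits (γ : PGraph T) : Set ℕ :=
  ⋃ x ∈ γ.dom, summit γ x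

/-- Nodes that lie on a cycle (reachable from one of their own children). -/
def cycles (γ : PGraph T) : Set ℕ :=
  {x | x ∈ ⋃ y ∈ γ.adj x, reach γ y}

/-- Targets of dangling edges. -/
def dangls (γ : PGraph T) : Set ℕ :=
  sinks γ \ ↑γ.dom

/-- Nodes forming cycles of size one. -/
def loops (γ : PGraph T) : Set ℕ :=
  {x | x ∈ γ.dom ∧ x ∈ γ.adj x}

/-- Filter by contents: keep nodes whose value lies in `V`. -/
noncomputable def filterVal (γ : PGraph T) (V : Set T) : PGraph T :=
  γ.restrict {x | ∃ v ∈ V, γ.val? x = some v}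

/-- Update the entry at node `x` (if present). -/
def update (γ : PGraph T) (x : ℕ) (p : T × List ℕ) : PGraph T where
  f := fun y => if y = x then (γ.f y).map (fun _ => p) else γ.f y
  dom := γ.dom
  mem_dom := by
    intro y
    rw [γ.mem_dom]
    by_cases h : y = x
    · subst h; cases hf : γ.f y <;> simp [hf]
    · simp [h]
  null_not_mem := by
    by_cases h : (0 : ℕ) = x
    · subst h; simp [γ.null_not_mem]
    · simp [h, γ.null_not_mem]

/-- Binary graphs: every adjacency list has exactly two elements. -/
def Binary (γ : PGraph T) : Prop :=
  ∀ x p, γ.f x = some p → p.2.length = 2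

/-- Marks of the Schorr-Waite algorithm. -/
inductive Mark | O | L | R | X
deriving DecidableEq

/-- The `if-mark` transformation on a node's mark and children. -/
def ifMark (f : ℕ → ℕ) (x : ℕ) : Mark × List ℕ → Unit × List ℕ
  | (Mark.L, [_, r]) => ((), [f x, r])
  | (Mark.R, [l, _]) => ((), [l, f x])
  | (_, l) => ((), l)

end PGraph

/-!
`reach` only follows paths that never revisit a node, yet it is plain reachability inside the
domain: cutting a path from `x` at its last visit to `x` leaves an edge out of `x` followed by
a path of `γ \ x`, which is the recursion defining `reach`.
With that description the theorem is immediate: a path from `x` either avoids `y`, and so is a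
path of `γ \ y`, or passes through `y`, and then its part after the last visit to `y` is a path
from `y`.
-/

namespace Relation.ReflTransGen

variable {α : Type*} {r : α → α → Prop} {a b : α}

theorem split_at_last_visit (c : α) (h : ReflTransGen r a b) :
    ReflTransGen (fun u v => u ≠ c ∧ r u v) a b ∨
      c = b ∨ ∃ z, r c z ∧ ReflTransGen (fun u v => u ≠ c ∧ r u v) z b := by
  induction h using head_induction_on with
  | refl => exact .inl .refl
  | @head a _ hac _ ih =>
    by_cases ha : a = c
    · subst ha
      rcases ih with avoid | ih
      · exact .inr (.inr ⟨_, hac, avoid⟩)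
      · exact .inr ih
    · exact ih.imp_left (head ⟨ha, hac⟩)

end Relation.ReflTransGen

namespace PGraph

open Relation

variable {T : Type} {γ : PGraph T} {x y : ℕ}

def Edge (γ : PGraph T) (x y : ℕ) : Prop :=
  y ∈ γ.adj x

theorem adj_eq_nil_of_notMem (hx : x ∉ γ.dom) : γ.adj x = [] := by
  rw [γ.mem_dom, Option.not_isSome_iff_eq_none] at hx
  simp [adj, hx]

theorem mem_dom_erase : x ∈ (γ.erase y).dom ↔ x ≠ y ∧ x ∈ γ.dom :=
  Finset.mem_erase

theorem edge_erase : (γ.erase y).Edge = fun u v => u ≠ y ∧ γ.Edge u v := by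
  ext u v
  by_cases hu : u = y <;> simp [Edge, adj, erase, hu]

theorem reach_of_mem (hx : x ∈ γ.dom) :
    γ.reach x = {x} ∪ ⋃ z ∈ γ.adj x, (γ.erase x).reach z := by
  rw [reach, dif_pos hx]

theorem reach_of_notMem (hx : x ∉ γ.dom) : γ.reach x = ∅ := by
  rw [reach, dif_neg hx]

theorem mem_reach_iff {γ : PGraph T} {x y : ℕ} :
    y ∈ γ.reach x ↔ y ∈ γ.dom ∧ ReflTransGen γ.Edge x y := by
  by_cases hx : x ∈ γ.dom
  · have ih (z : ℕ) : y ∈ (γ.erase x).reach z ↔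
        y ∈ (γ.erase x).dom ∧ ReflTransGen (γ.erase x).Edge z y :=
      mem_reach_iff (γ := γ.erase x) (x := z)
    simp only [reach_of_mem hx, Set.mem_union, Set.mem_singleton_iff, Set.mem_iUnion,
      exists_prop, ih, mem_dom_erase, edge_erase]
    constructor
    · rintro (rfl | ⟨z, hxz, ⟨-, hy⟩, hzy⟩)
      · exact ⟨hx, .refl⟩
      · exact ⟨hy, .head hxz (ReflTransGen.mono (fun _ _ => And.right) _ _ hzy)⟩
    · rintro ⟨hy, hxy⟩
      rcases hxy.split_at_last_visit x with avoid | rfl | ⟨z, hxz, hzy⟩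
      · rcases avoid.cases_head with rfl | ⟨_, hxx, -⟩
        exacts [.inl rfl, absurd rfl hxx.1]
      · exact .inl rfl
      · obtain rfl | hyx := eq_or_ne y x
        exacts [.inl rfl, .inr ⟨z, hxz, ⟨hyx, hy⟩, hzy⟩]
  · simp only [reach_of_notMem hx, Set.mem_empty_iff_false, false_iff, not_and]
    intro hy hxy
    rcases hxy.cases_head with rfl | ⟨z, hxz, -⟩
    · exact hx hy
    · simp [Edge, adj_eq_nil_of_notMem hx] at hxz
termination_by γ.dom.card
decreasing_by simpa [erase] using Finset.card_erase_lt_of_mem hx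

end PGraph

open PGraph Relation in
/-- Reachability splits at an intermediate node. -/
theorem reach_erase_of_mem (T : Type) (γ : PGraph T) (x y : ℕ)
    (h : y ∈ γ.reach x) :
    γ.reach x = (γ.erase y).reach x ∪ γ.reach y := by
  obtain ⟨-, hxy⟩ := mem_reach_iff.1 h
  ext w
  simp only [Set.mem_union, mem_reach_iff, mem_dom_erase, edge_erase]
  constructor
  · rintro ⟨hw, hxw⟩
    rcases hxw.split_at_last_visit y with avoid | rfl | ⟨z, hyz, hzw⟩
    · obtain rfl | hwy := eq_or_ne w y
      exacts [.inr ⟨hw, .refl⟩, .inl ⟨⟨hwy, hw⟩, avoid⟩]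
    · exact .inr ⟨hw, .refl⟩
    · exact .inr ⟨hw, .head hyz (ReflTransGen.mono (fun _ _ => And.right) _ _ hzw)⟩
  · rintro (⟨⟨-, hw⟩, hxw⟩ | ⟨hw, hyw⟩)
    · exact ⟨hw, ReflTransGen.mono (fun _ _ => And.right) _ _ hxw⟩
    · exact ⟨hw, hxy.trans hyw⟩
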